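/- arXiv:1708.00050 — 9 statements merged into one kernel-verified Lean document; each statement's English description precedes it below -/
import Mathlib

section
/- The matrix C^r derived from the binary reflected Gray code satisfies the recursion C^1 = (0;1) and C^{r+1} = ((C^r, 0); (C^r + 1⊗C^r_{2^r}, 1)), where C^r_{2^r} is the last row of C^r, 1 is the all-ones vector of length 2^r, and u⊗v = u v^T. -/
/-- Binary reflected Gray code `K^r`, 0-indexed: `grayK r j i` is the entry in row
`j ∈ {0,…,2^r−1}` and column `i ∈ {0,…,r−1}`.  Base case `K^1 = (0;1)` and
`K^{r+1} = ((K^r, 0); (rev(K^r), 1))` where `rev` reverses the rows. -/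
def grayK : ℕ → ℕ → ℕ → ℤ
  | 0, _, _ => 0
  | (r+1), j, i =>
    if j < 2^r then (if i = r then 0 else grayK r j i)
    else (if i = r then 1 else grayK r (2^(r+1) - 1 - j) i)

/-- `C^r`, 0-indexed: `grayC r k i = Σ_{j=1}^{k} |K^r_{j,i} − K^r_{j−1,i}|`, the
number of value changes among the first `k+1` entries of column `i` of the
binary reflected Gray code. -/
def grayC (r k i : ℕ) : ℤ := ∑ j ∈ Finset.range k, |grayK r (j+1) i - grayK r j i|

lemma grayK_lo (r j i : ℕ) (hj : j < 2^r) :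
    grayK (r+1) j i = if i = r then 0 else grayK r j i := by
  simp [grayK, hj]

lemma grayK_hi (r j i : ℕ) (hj : ¬ j < 2^r) :
    grayK (r+1) j i = if i = r then 1 else grayK r (2^(r+1) - 1 - j) i := by
  simp [grayK, hj]

lemma grayK_reflect (s j i : ℕ) (hj : j < 2^(s+1)) :
    grayK (s+1) (2^(s+1) - 1 - j) i
      = if i = s then 1 - grayK (s+1) j i else grayK (s+1) j i := by
  have h2 : (2:ℕ)^(s+1) = 2 * 2^s := by ring
  by_cases h : j < 2^s
  · have h1 : ¬ (2^(s+1) - 1 - j < 2^s) := by omega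
    have h3 : 2^(s+1) - 1 - (2^(s+1) - 1 - j) = j := by omega
    rw [grayK_hi _ _ _ h1, grayK_lo _ _ _ h, h3]
    split_ifs <;> ring
  · have h1 : 2^(s+1) - 1 - j < 2^s := by omega
    rw [grayK_lo _ _ _ h1, grayK_hi _ _ _ h]
    split_ifs <;> ring

/-- The change-count transform `C^r` of the binary reflected Gray code satisfies
the recursion `C^1 = (0;1)` and `C^{r+1} = ((C^r, 0); (C^r + 1 ⊗ C^r_last, 1))`:
the top half of `C^{r+1}` is `C^r` with a zero column appended, and the bottom
half is `C^r` shifted by the last row of `C^r`, with a ones column appended. -/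
theorem grayC_recursion :
    (grayC 1 0 0 = 0 ∧ grayC 1 1 0 = 1) ∧
    (∀ r : ℕ, 1 ≤ r → ∀ k < 2^r,
      ((∀ i < r, grayC (r+1) k i = grayC r k i) ∧ grayC (r+1) k r = 0) ∧
      ((∀ i < r, grayC (r+1) (2^r + k) i = grayC r k i + grayC r (2^r - 1) i) ∧
        grayC (r+1) (2^r + k) r = 1)) := by
  constructor
  · constructor
    · simp [grayC]
    · simp [grayC, grayK]
  · intro r hr k hk
    have hsplit : ∀ i, grayC (r+1) (2^r + k) i =
        (∑ j ∈ Finset.range (2^r), |grayK (r+1) (j+1) i - grayK (r+1) j i|) +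
        ∑ m ∈ Finset.range k,
          |grayK (r+1) (2^r + m + 1) i - grayK (r+1) (2^r + m) i| := by
      intro i
      rw [grayC, Finset.sum_range_add]
    have h1 : (1:ℕ) ≤ 2^r := Nat.one_le_two_pow
    refine ⟨⟨?_, ?_⟩, ?_, ?_⟩
    · -- top, i < r
      intro i hi
      unfold grayC
      refine Finset.sum_congr rfl fun j hj => ?_
      have hj' : j + 1 < 2^r := by
        have := Finset.mem_range.mp hj; omega
      rw [grayK_lo _ _ _ hj', grayK_lo _ _ _ (by omega), if_neg (by omega),
        if_neg (by omega)]
    · -- top, i = r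
      unfold grayC
      refine Finset.sum_eq_zero fun j hj => ?_
      have hj' : j + 1 < 2^r := by
        have := Finset.mem_range.mp hj; omega
      rw [grayK_lo _ _ _ hj', grayK_lo _ _ _ (by omega), if_pos rfl, if_pos rfl]
      simp
    · -- bottom, i < r
      intro i hi
      rw [hsplit]
      have hfirst : (∑ j ∈ Finset.range (2^r),
          |grayK (r+1) (j+1) i - grayK (r+1) j i|) = grayC r (2^r - 1) i := by
        have he : 2^r = (2^r - 1) + 1 := by omega
        rw [he, Finset.sum_range_succ]
        have hb : grayK (r+1) (2^r - 1 + 1) i = grayK r (2^r - 1) i := by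
          have : 2^r - 1 + 1 = 2^r := by omega
          rw [this, grayK_hi _ _ _ (by omega), if_neg (by omega)]
          congr 1
          have : (2:ℕ)^(r+1) = 2 * 2^r := by ring
          omega
        have hb' : grayK (r+1) (2^r - 1) i = grayK r (2^r - 1) i := by
          rw [grayK_lo _ _ _ (by omega), if_neg (by omega)]
        rw [hb, hb', sub_self, abs_zero, add_zero, grayC]
        refine Finset.sum_congr rfl fun j hj => ?_
        have hj' : j + 1 < 2^r := by
          have := Finset.mem_range.mp hj; omega
        rw [grayK_lo _ _ _ hj', grayK_lo _ _ _ (by omega), if_neg (by omega),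
          if_neg (by omega)]
      have hsecond : (∑ m ∈ Finset.range k,
          |grayK (r+1) (2^r + m + 1) i - grayK (r+1) (2^r + m) i|) = grayC r k i := by
        rw [grayC]
        refine Finset.sum_congr rfl fun m hm => ?_
        have hm' : m + 1 ≤ k := Finset.mem_range.mp hm
        obtain ⟨s, rfl⟩ : ∃ s, r = s + 1 := ⟨r - 1, by omega⟩
        have h2 : (2:ℕ)^(s+1+1) = 2 * 2^(s+1) := by ring
        have e1 : 2^(s+1+1) - 1 - (2^(s+1) + m + 1) = 2^(s+1) - 1 - (m+1) := by omega
        have e2 : 2^(s+1+1) - 1 - (2^(s+1) + m) = 2^(s+1) - 1 - m := by omega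
        rw [grayK_hi (s+1) (2^(s+1) + m + 1) i (by omega),
          grayK_hi (s+1) (2^(s+1) + m) i (by omega),
          if_neg (show ¬ i = s + 1 by omega), if_neg (show ¬ i = s + 1 by omega),
          e1, e2, grayK_reflect s (m+1) i (by omega), grayK_reflect s m i (by omega)]
        split_ifs with h
        · rw [abs_sub_comm]; ring_nf
        · rfl
      rw [hfirst, hsecond]; ring
    · -- bottom, i = r
      rw [hsplit]
      have hfirst : (∑ j ∈ Finset.range (2^r),
          |grayK (r+1) (j+1) r - grayK (r+1) j r|) = 1 := by
        have he : 2^r = (2^r - 1) + 1 := by omega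
        rw [he, Finset.sum_range_succ]
        have hb : grayK (r+1) (2^r - 1 + 1) r = 1 := by
          rw [grayK_hi _ _ _ (by omega), if_pos rfl]
        have hb' : grayK (r+1) (2^r - 1) r = 0 := by
          rw [grayK_lo _ _ _ (by omega), if_pos rfl]
        rw [hb, hb']
        have hz : (∑ j ∈ Finset.range (2^r - 1),
            |grayK (r+1) (j+1) r - grayK (r+1) j r|) = 0 := by
          refine Finset.sum_eq_zero fun j hj => ?_
          have hj' : j + 1 < 2^r := by
            have := Finset.mem_range.mp hj; omega
          rw [grayK_lo _ _ _ hj', grayK_lo _ _ _ (by omega), if_pos rfl, if_pos rfl]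
          simp
        rw [hz]; norm_num
      have hsecond : (∑ m ∈ Finset.range k,
          |grayK (r+1) (2^r + m + 1) r - grayK (r+1) (2^r + m) r|) = 0 := by
        refine Finset.sum_eq_zero fun m hm => ?_
        rw [grayK_hi _ _ _ (by omega), grayK_hi _ _ _ (by omega), if_pos rfl,
          if_pos rfl]
        simp
      rw [hfirst, hsecond]; norm_num
end

section
/- Define Z^r ∈ Z^{2^r × r} by applying the map 𝒜(y)_i = y_i − Σ_{k=i+1}^r y_k to each row of C^r (the change-count transform of the binary reflected Gray code). Then every entry of Z^r lies in {0,1}, and the rows of Z^r are pairwise distinct. -/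
/-- `Z^r`: the result of applying the linear map `𝒜(y)_i = y_i − Σ_{k>i} y_k`
to each row of `C^r` (0-indexed columns `i ∈ {0,…,r−1}`). -/
def zigzagZ (r k i : ℕ) : ℤ := grayC r k i - ∑ j ∈ Finset.Ico (i+1) r, grayC r k j

/-! Row `j` of `K^r` is the Gray code `j ^^^ j / 2`, whose bit `i` is the parity of
`f_i(j) = ⌊j/2^i⌋ - ⌊j/2^(i+1)⌋`. Since `f_i` grows by `0` or `1` at each step, column `i`
changes exactly when `f_i` grows, so `C^r_{k,i} = f_i(k)`. The transform `𝒜` then telescopes: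
for `k < 2^r`, `Z^r_{k,i} = ⌊k/2^i⌋ - 2⌊k/2^(i+1)⌋` is bit `i` of `k`, i.e. row `k` of `Z^r`
is the binary expansion of `k`. -/

theorem testBit_grayCode (n i : ℕ) :
    (n ^^^ n / 2).testBit i = (n.testBit i ^^ n.testBit (i + 1)) := by
  rw [Nat.testBit_xor, Nat.testBit_div_two]

theorem testBit_grayCode_two_pow_sub {r j i : ℕ} (hj : j < 2 ^ (r + 1)) (hi : i ≠ r) :
    ((2 ^ (r + 1) - (j + 1)) ^^^ (2 ^ (r + 1) - (j + 1)) / 2).testBit i =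
      (j ^^^ j / 2).testBit i := by
  simp only [testBit_grayCode, Nat.testBit_two_pow_sub_succ hj]
  rcases lt_or_gt_of_ne hi with hi | hi
  · simp [hi, Nat.lt_succ_of_lt hi]
  · have high_bit (i' : ℕ) (h : r + 1 ≤ i') : j.testBit i' = false :=
      Nat.testBit_lt_two_pow (hj.trans_le (Nat.pow_le_pow_right two_pos h))
    have hi' : ¬ i < r + 1 := by omega
    have hi'' : ¬ i + 1 < r + 1 := by omega
    simp [high_bit i hi, high_bit (i + 1) (by omega), hi', hi'']

theorem grayK_eq_toNat_testBit {r j : ℕ} (i : ℕ) (hj : j < 2 ^ r) :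
    grayK r j i = ((j ^^^ j / 2).testBit i).toNat := by
  induction r generalizing j with
  | zero => simp [grayK, Nat.lt_one_iff.mp hj]
  | succ r ih =>
    rw [grayK]
    split_ifs with hjr hir hir
    · subst hir
      have : j ^^^ j / 2 < 2 ^ i := Nat.xor_lt_two_pow hjr ((Nat.div_le_self j 2).trans_lt hjr)
      simp [Nat.testBit_lt_two_pow this]
    · exact ih hjr
    · subst hir
      have hdiv : j / 2 ^ i = 1 := Nat.div_eq_of_lt_le (by omega) (by rw [pow_succ] at hj; omega)
      rw [testBit_grayCode, Nat.testBit_lt_two_pow hj, Nat.testBit_eq_decide_div_mod_eq, hdiv]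
      rfl
    · rw [ih (by omega), ← testBit_grayCode_two_pow_sub hj hir,
        show 2 ^ (r + 1) - 1 - j = 2 ^ (r + 1) - (j + 1) by omega]

def grayFlipCount (i n : ℕ) : ℕ := n / 2 ^ i - n / 2 ^ (i + 1)

theorem div_two_pow_succ (n i : ℕ) : n / 2 ^ (i + 1) = n / 2 ^ i / 2 := by
  rw [pow_succ, Nat.div_div_eq_div_mul]

theorem toNat_testBit_grayCode (n i : ℕ) :
    ((n ^^^ n / 2).testBit i).toNat = grayFlipCount i n % 2 := by
  rw [testBit_grayCode, Nat.testBit_eq_decide_div_mod_eq, Nat.testBit_eq_decide_div_mod_eq,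
    grayFlipCount, div_two_pow_succ]
  generalize n / 2 ^ i = a
  rcases Nat.mod_two_eq_zero_or_one a with h | h <;>
    rcases Nat.mod_two_eq_zero_or_one (a / 2) with h' | h' <;> simp [h, h'] <;> omega

theorem grayFlipCount_succ (i n : ℕ) :
    grayFlipCount i (n + 1) = grayFlipCount i n ∨
      grayFlipCount i (n + 1) = grayFlipCount i n + 1 := by
  have : (n + 1) / 2 ^ i = n / 2 ^ i + if 2 ^ i ∣ n + 1 then 1 else 0 := Nat.succ_div
  simp only [grayFlipCount, div_two_pow_succ]
  split_ifs at this <;> omega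

theorem abs_grayK_succ_sub {r n : ℕ} (i : ℕ) (hn : n + 1 < 2 ^ r) :
    |grayK r (n + 1) i - grayK r n i| = grayFlipCount i (n + 1) - grayFlipCount i n := by
  rw [grayK_eq_toNat_testBit i hn, grayK_eq_toNat_testBit i (by omega),
    toNat_testBit_grayCode, toNat_testBit_grayCode]
  rcases grayFlipCount_succ i n with h | h <;> rw [h]
  · simp
  · rcases Nat.mod_two_eq_zero_or_one (grayFlipCount i n) with h' | h' <;>
      simp [Nat.add_mod, h']

theorem grayC_eq_grayFlipCount {r k : ℕ} (i : ℕ) (hk : k < 2 ^ r) :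
    grayC r k i = grayFlipCount i k := by
  rw [grayC, Finset.sum_congr rfl fun j hj ↦ abs_grayK_succ_sub i
      ((Nat.succ_le_of_lt (Finset.mem_range.mp hj)).trans_lt hk),
    Finset.sum_range_sub (fun j ↦ (grayFlipCount i j : ℤ))]
  simp [grayFlipCount]

theorem natCast_grayFlipCount (i n : ℕ) :
    (grayFlipCount i n : ℤ) = (n / 2 ^ i : ℕ) - (n / 2 ^ (i + 1) : ℕ) :=
  Nat.cast_sub (Nat.div_le_div_left (Nat.pow_le_pow_right two_pos i.le_succ) (by positivity))

theorem zigzagZ_eq_toNat_testBit {r k i : ℕ} (hk : k < 2 ^ r) (hi : i < r) :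
    zigzagZ r k i = (k.testBit i).toNat := by
  have telescope : ∑ j ∈ Finset.Ico (i + 1) r, (grayFlipCount j k : ℤ) = (k / 2 ^ (i + 1) : ℕ) :=
    calc ∑ j ∈ Finset.Ico (i + 1) r, (grayFlipCount j k : ℤ)
        = -∑ j ∈ Finset.Ico (i + 1) r, (((k / 2 ^ (j + 1) : ℕ) : ℤ) - (k / 2 ^ j : ℕ)) := by
          simp only [natCast_grayFlipCount, ← Finset.sum_neg_distrib, neg_sub]
      _ = (k / 2 ^ (i + 1) : ℕ) := by
          rw [Finset.sum_Ico_sub (fun j ↦ ((k / 2 ^ j : ℕ) : ℤ)) hi, Nat.div_eq_of_lt hk]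
          simp
  simp only [zigzagZ, grayC_eq_grayFlipCount _ hk]
  rw [telescope, natCast_grayFlipCount, Nat.toNat_testBit, div_two_pow_succ]
  omega

theorem Bool.toNat_injective : Function.Injective Bool.toNat := by
  decide

theorem zigzagZ_binary_and_rows_distinct_general (r : ℕ) :
    (∀ k < 2^r, ∀ i < r, zigzagZ r k i = 0 ∨ zigzagZ r k i = 1) ∧
    (∀ k < 2^r, ∀ k' < 2^r, k ≠ k' → ∃ i < r, zigzagZ r k i ≠ zigzagZ r k' i) := by
  refine ⟨fun k hk i hi ↦ ?_, fun k hk k' hk' hne ↦ ?_⟩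
  · rw [zigzagZ_eq_toNat_testBit hk hi]
    cases k.testBit i <;> simp
  · by_contra! h
    refine hne (Nat.eq_of_testBit_eq fun i ↦ ?_)
    rcases lt_or_ge i r with hi | hi
    · have hrow := h i hi
      rw [zigzagZ_eq_toNat_testBit hk hi, zigzagZ_eq_toNat_testBit hk' hi] at hrow
      exact Bool.toNat_injective (by exact_mod_cast hrow)
    · have hpow : 2 ^ r ≤ 2 ^ i := Nat.pow_le_pow_right two_pos hi
      rw [Nat.testBit_lt_two_pow (hk.trans_le hpow), Nat.testBit_lt_two_pow (hk'.trans_le hpow)]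

/-- Every entry of `Z^r` lies in `{0,1}`, and the rows of `Z^r` are pairwise
distinct. -/
theorem zigzagZ_binary_and_rows_distinct (r : ℕ) (hr : 1 ≤ r) :
    (∀ k < 2^r, ∀ i < r, zigzagZ r k i = 0 ∨ zigzagZ r k i = 1) ∧
    (∀ k < 2^r, ∀ k' < 2^r, k ≠ k' → ∃ i < r, zigzagZ r k i ≠ zigzagZ r k' i) :=
  zigzagZ_binary_and_rows_distinct_general r
end

section
/- The rows of the matrix C^r (the change-count transform of the binary reflected Gray code) are in convex position and the polytope conv{C^r_1,…,C^r_{2^r}} is lattice-empty: its set of extreme points equals {C^r_k}_{k=1}^{2^r}, and its intersection with Z^r equals {C^r_k}_{k=1}^{2^r}. -/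
/-- The set of rows of `C^r`, viewed as points of `ℝ^r`. -/
def grayCRows (r : ℕ) : Set (Fin r → ℝ) :=
  {v | ∃ k < 2^r, v = fun i : Fin r => (grayC r k (i : ℕ) : ℝ)}

/-!
Column `i` of the reflected Gray code changes value exactly at the rows `j ≡ 2^i (mod 2^(i+1))`,
so `C^r_{k,i} = ⌊k/2^i⌋ - ⌊k/2^(i+1)⌋` for `k < 2^r`. Hence the integral linear map
`x ↦ (x_i - ∑_{j>i} x_j)_i` sends row `k` to the binary digits of `k`, i.e. the rows bijectively
onto the vertices of the unit cube `[0,1]^r`. That map is therefore invertible, and as it preserves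
`ℤ^r`, it transports the two properties of the cube (its vertices are its extreme points and its
only lattice points) to `conv{C^r_k}`.
-/

open Set

section Cube

variable (ι : Type*)

def latticePoints : Set (ι → ℝ) := {v | ∀ i, ∃ z : ℤ, v i = z}

def unitCube : Set (ι → ℝ) := univ.pi fun _ => Icc 0 1

def cubeVertices : Set (ι → ℝ) := univ.pi fun _ => {0, 1}

lemma convexHull_cubeVertices [Finite ι] : convexHull ℝ (cubeVertices ι) = unitCube ι := by
  simp [cubeVertices, unitCube, convexHull_pi, convexHull_pair, segment_eq_Icc]

lemma extremePoints_unitCube : extremePoints ℝ (unitCube ι) = cubeVertices ι := by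
  simp only [unitCube, cubeVertices, extremePoints_pi, extremePoints_Icc zero_le_one]

lemma unitCube_inter_latticePoints : unitCube ι ∩ latticePoints ι = cubeVertices ι := by
  ext v
  simp only [unitCube, cubeVertices, latticePoints, mem_inter_iff, mem_univ_pi, mem_ofPred_eq,
    ← forall_and, mem_Icc, mem_insert_iff, mem_singleton_iff]
  refine forall_congr' fun i => ⟨?_, ?_⟩
  · rintro ⟨⟨h0, h1⟩, z, hz⟩
    rw [hz] at h0 h1 ⊢
    have hz01 : z = 0 ∨ z = 1 := by
      have : 0 ≤ z := by exact_mod_cast h0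
      have : z ≤ 1 := by exact_mod_cast h1
      omega
    rcases hz01 with rfl | rfl <;> simp
  · rintro (h | h)
    · exact ⟨by simp [h], 0, by simp [h]⟩
    · exact ⟨by simp [h], 1, by simp [h]⟩

variable {ι}

lemma LinearMap.surjective_of_cubeVertices_subset_range [Finite ι]
    (f : (ι → ℝ) →ₗ[ℝ] (ι → ℝ)) (hf : cubeVertices ι ⊆ range f) : Function.Surjective f := by
  classical
  rw [← LinearMap.range_eq_top, eq_top_iff, ← (Pi.basisFun ℝ ι).span_eq, Submodule.span_le]
  rintro _ ⟨i, rfl⟩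
  refine hf fun j _ => ?_
  by_cases h : j = i <;> simp [h]

theorem extremePoints_convexHull_and_inter_latticePoints_of_image_eq_cubeVertices [Finite ι]
    (f : (ι → ℝ) →ₗ[ℝ] (ι → ℝ)) (hf : MapsTo f (latticePoints ι) (latticePoints ι))
    {S : Set (ι → ℝ)} (hSL : S ⊆ latticePoints ι) (hS : f '' S = cubeVertices ι) :
    extremePoints ℝ (convexHull ℝ S) = S ∧ convexHull ℝ S ∩ latticePoints ι = S := by
  have hsurj := f.surjective_of_cubeVertices_subset_range (hS ▸ image_subset_range f S)
  let e := LinearEquiv.ofBijective f ⟨LinearMap.injective_iff_surjective.2 hsurj, hsurj⟩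
  have hS' : S = e.symm '' cubeVertices ι := by
    rw [← hS]; exact (e.symm_image_image S).symm
  have hhull : convexHull ℝ S = e.symm '' unitCube ι := by
    rw [hS', ← convexHull_cubeVertices]; exact (e.symm.toLinearMap.image_convexHull _).symm
  refine ⟨by rw [hhull, ← image_extremePoints, extremePoints_unitCube, hS'], ?_⟩
  refine Subset.antisymm ?_ fun x hx => ⟨subset_convexHull ℝ S hx, hSL hx⟩
  rintro x ⟨hx, hxL⟩
  rw [hhull] at hx
  obtain ⟨y, hy, rfl⟩ := hx
  have hyL : y ∈ latticePoints ι := by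
    have := hf hxL
    rwa [show f (e.symm y) = e (e.symm y) from rfl, e.apply_symm_apply] at this
  have hyV : y ∈ cubeVertices ι := unitCube_inter_latticePoints ι ▸ ⟨hy, hyL⟩
  rw [hS']
  exact mem_image_of_mem _ hyV

end Cube

lemma Nat.div_add_div_add_one_eq {a b m n : ℕ} (hm : 0 < m) (h : a + b + 1 = m * n) :
    a / m + b / m + 1 = n := by
  have ha := Nat.div_add_mod a m
  have hb := Nat.div_add_mod b m
  have hsa := Nat.mod_lt a hm
  have hsb := Nat.mod_lt b hm
  have hlt : a / m + b / m < n :=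
    Nat.lt_of_mul_lt_mul_left (a := m) (by rw [mul_add]; omega)
  have hgt : n < a / m + b / m + 2 :=
    Nat.lt_of_mul_lt_mul_left (a := m) (by rw [mul_add, mul_add]; omega)
  omega

lemma Finset.sum_range_abs_sub_mod_two {f : ℕ → ℕ}
    (hf : ∀ j, f (j + 1) = f j ∨ f (j + 1) = f j + 1) (k : ℕ) :
    ∑ j ∈ range k, |((f (j + 1) % 2 : ℕ) : ℤ) - ((f j % 2 : ℕ) : ℤ)| = f k - f 0 := by
  induction k with
  | zero => simp
  | succ k ih =>
    rw [sum_range_succ, ih]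
    rcases hf k with h | h <;> rw [h]
    · simp
    · rcases Nat.mod_two_eq_zero_or_one (f k) with h2 | h2 <;>
        simp [Nat.add_mod, h2] <;> ring

/-- The number of value changes of column `i` of the reflected Gray code among the rows
`0, …, j`. -/
def grayFlips (i j : ℕ) : ℕ := (j + 2 ^ i) / 2 ^ (i + 1)

lemma grayFlips_zero_right (i : ℕ) : grayFlips i 0 = 0 :=
  Nat.div_eq_of_lt (by rw [zero_add, pow_succ]; have := Nat.one_le_two_pow (n := i); omega)

lemma grayFlips_succ (i j : ℕ) :
    grayFlips i (j + 1) = grayFlips i j ∨ grayFlips i (j + 1) = grayFlips i j + 1 := by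
  unfold grayFlips
  rw [add_right_comm, Nat.succ_div]
  split_ifs <;> simp

lemma grayFlips_add_div (i k : ℕ) : grayFlips i k + k / 2 ^ (i + 1) = k / 2 ^ i := by
  have h : grayFlips i k = (k / 2 ^ i + 1) / 2 := by
    rw [grayFlips, pow_succ, ← Nat.div_div_eq_div_mul, Nat.add_div_right _ (by positivity)]
  rw [h, pow_succ, ← Nat.div_div_eq_div_mul]
  omega

/-- The parity of `grayFlips` is invariant under the row reflection `j ↦ 2^n - 1 - j`: the two
quotients add up to `2^(n-i-1)`, which is even. -/
lemma grayFlips_reflect_mod_two {n i j : ℕ} (hi : i + 1 < n) (hj : j < 2 ^ n) :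
    grayFlips i (2 ^ n - 1 - j) % 2 = grayFlips i j % 2 := by
  obtain ⟨d, rfl⟩ : ∃ d, n = i + 1 + (d + 1) := ⟨n - (i + 2), by omega⟩
  have hsum := Nat.div_add_div_add_one_eq (a := 2 ^ (i + 1 + (d + 1)) - 1 - j + 2 ^ i)
    (b := j + 2 ^ i) (m := 2 ^ (i + 1)) (n := 2 * 2 ^ d + 1) (by positivity)
    (by rw [pow_add, pow_succ, pow_succ] at hj ⊢; ring_nf at hj ⊢; omega)
  unfold grayFlips
  omega

lemma grayK_eq_grayFlips_mod_two {r j i : ℕ} (hj : j < 2 ^ r) (hi : i < r) :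
    grayK r j i = (grayFlips i j % 2 : ℕ) := by
  induction r generalizing j i with
  | zero => omega
  | succ r ih =>
    have hpow : 2 ^ (r + 1) = 2 * 2 ^ r := by ring
    rw [grayK]
    split_ifs with hjr hir hir
    · subst hir
      rw [grayFlips, Nat.div_eq_of_lt (by omega : j + 2 ^ i < 2 ^ (i + 1))]; rfl
    · exact ih hjr (by omega)
    · subst hir
      rw [grayFlips, Nat.div_eq_of_lt_le (k := 1) (by omega) (by omega)]; rfl
    · rw [ih (by omega) (by omega), grayFlips_reflect_mod_two (by omega) hj]

lemma grayC_eq_grayFlips {r k i : ℕ} (hk : k < 2 ^ r) (hi : i < r) :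
    grayC r k i = grayFlips i k := by
  have hsummand : ∀ j ∈ Finset.range k, |grayK r (j + 1) i - grayK r j i|
      = |((grayFlips i (j + 1) % 2 : ℕ) : ℤ) - ((grayFlips i j % 2 : ℕ) : ℤ)| := by
    intro j hj
    rw [Finset.mem_range] at hj
    rw [grayK_eq_grayFlips_mod_two (by omega) hi, grayK_eq_grayFlips_mod_two (by omega) hi]
  rw [grayC, Finset.sum_congr rfl hsummand, Finset.sum_range_abs_sub_mod_two (grayFlips_succ i),
    grayFlips_zero_right, Nat.cast_zero, sub_zero]

def grayCRow (r k : ℕ) : Fin r → ℝ := fun i => (grayC r k i : ℝ)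

lemma grayCRow_apply {r k : ℕ} (hk : k < 2 ^ r) (i : Fin r) :
    grayCRow r k i = ((k / 2 ^ (i : ℕ) : ℕ) : ℝ) - ((k / 2 ^ ((i : ℕ) + 1) : ℕ) : ℝ) := by
  rw [grayCRow, grayC_eq_grayFlips hk i.isLt, eq_sub_iff_add_eq, Int.cast_natCast,
    ← Nat.cast_add, grayFlips_add_div]

section TailDifference

variable (ι : Type*) [Preorder ι] [LocallyFiniteOrderTop ι]

def tailDiff : (ι → ℝ) →ₗ[ℝ] (ι → ℝ) :=
  LinearMap.pi fun i => LinearMap.proj i - ∑ j ∈ Finset.Ioi i, LinearMap.proj j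

variable {ι}

lemma tailDiff_apply (x : ι → ℝ) (i : ι) : tailDiff ι x i = x i - ∑ j ∈ Finset.Ioi i, x j := by
  simp [tailDiff]

lemma tailDiff_mapsTo_latticePoints :
    MapsTo (tailDiff ι) (latticePoints ι) (latticePoints ι) := by
  intro x hx i
  choose z hz using hx
  exact ⟨z i - ∑ j ∈ Finset.Ioi i, z j, by simp [tailDiff_apply, hz]⟩

end TailDifference

def binaryDigits (r k : ℕ) : Fin r → ℝ := fun i => (k / 2 ^ (i : ℕ) % 2 : ℕ)

lemma range_binaryDigits (r : ℕ) :
    range (fun k : Fin (2 ^ r) => binaryDigits r k) = cubeVertices (Fin r) := by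
  have hcomp : (fun k : Fin (2 ^ r) => binaryDigits r k)
      = (fun f : Fin r → Fin 2 => fun i => ((f i : ℕ) : ℝ)) ∘ finFunctionFinEquiv.symm := by
    ext k i
    simp [binaryDigits, finFunctionFinEquiv_symm_apply_val]
  rw [hcomp, range_comp, finFunctionFinEquiv.symm.range_eq_univ, image_univ]
  ext v
  simp only [mem_range, cubeVertices, mem_univ_pi, mem_insert_iff, mem_singleton_iff]
  constructor
  · rintro ⟨f, rfl⟩ i
    rcases Fin.exists_fin_two.mp ⟨f i, rfl⟩ with h | h <;> simp [h]
  · intro hv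
    refine ⟨fun i => if v i = 0 then 0 else 1, funext fun i => ?_⟩
    rcases hv i with h | h <;> simp [h]

lemma tailDiff_grayCRow {r k : ℕ} (hk : k < 2 ^ r) :
    tailDiff (Fin r) (grayCRow r k) = binaryDigits r k := by
  funext i
  set F : ℕ → ℝ := fun t => ((k / 2 ^ t : ℕ) : ℝ)
  have hF : F r = 0 := by simp [F, Nat.div_eq_of_lt hk]
  have htail : ∑ j ∈ Finset.Ioi i, grayCRow r k j = F (i + 1) := calc
    ∑ j ∈ Finset.Ioi i, grayCRow r k j = ∑ t ∈ Finset.Ioo (i : ℕ) r, (F t - F (t + 1)) := by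
      rw [← Fin.map_valEmbedding_Ioi, Finset.sum_map]
      exact Finset.sum_congr rfl fun j _ => grayCRow_apply hk j
    _ = -∑ t ∈ Finset.Ico ((i : ℕ) + 1) r, (F (t + 1) - F t) := by
      rw [Finset.Ico_add_one_left_eq_Ioo, ← Finset.sum_neg_distrib]
      simp only [neg_sub]
    _ = F (i + 1) := by rw [Finset.sum_Ico_sub F (by omega), hF, zero_sub, neg_neg]
  have hdigit : (k / 2 ^ (i : ℕ) : ℕ) = 2 * (k / 2 ^ ((i : ℕ) + 1)) + k / 2 ^ (i : ℕ) % 2 := by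
    rw [pow_succ, ← Nat.div_div_eq_div_mul, Nat.div_add_mod]
  have hdigitR : F i = 2 * F (i + 1) + ((k / 2 ^ (i : ℕ) % 2 : ℕ) : ℝ) := by
    simp only [F]; exact_mod_cast hdigit
  rw [binaryDigits, tailDiff_apply, htail, grayCRow_apply hk]
  change F i - F (i + 1) - F (i + 1) = _
  rw [hdigitR]
  ring

lemma image_tailDiff_grayCRows (r : ℕ) :
    tailDiff (Fin r) '' grayCRows r = cubeVertices (Fin r) := by
  rw [← range_binaryDigits]
  ext y
  constructor
  · rintro ⟨_, ⟨k, hk, rfl⟩, rfl⟩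
    exact ⟨⟨k, hk⟩, (tailDiff_grayCRow hk).symm⟩
  · rintro ⟨k, rfl⟩
    exact ⟨grayCRow r k, ⟨k, k.isLt, rfl⟩, tailDiff_grayCRow k.isLt⟩

lemma grayCRows_subset_latticePoints (r : ℕ) : grayCRows r ⊆ latticePoints (Fin r) := by
  rintro _ ⟨k, -, rfl⟩ i
  exact ⟨_, rfl⟩

theorem grayC_rows_convex_position_and_lattice_empty_general (r : ℕ) :
    Set.extremePoints ℝ (convexHull ℝ (grayCRows r)) = grayCRows r ∧
    convexHull ℝ (grayCRows r) ∩ {v : Fin r → ℝ | ∀ i, ∃ z : ℤ, v i = (z : ℝ)}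
      = grayCRows r :=
  extremePoints_convexHull_and_inter_latticePoints_of_image_eq_cubeVertices (tailDiff (Fin r))
    tailDiff_mapsTo_latticePoints (grayCRows_subset_latticePoints r) (image_tailDiff_grayCRows r)

/-- The rows of `C^r` are in convex position and their convex hull is
lattice-empty: the extreme points of `conv{C^r_k}` are exactly the rows, and
the only integer points of `conv{C^r_k}` are the rows. -/
theorem grayC_rows_convex_position_and_lattice_empty (r : ℕ) (hr : 1 ≤ r) :
    Set.extremePoints ℝ (convexHull ℝ (grayCRows r)) = grayCRows r ∧
    convexHull ℝ (grayCRows r) ∩ {v : Fin r → ℝ | ∀ i, ∃ z : ℤ, v i = (z : ℝ)}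
      = grayCRows r :=
  grayC_rows_convex_position_and_lattice_empty_general r
end

section
/- For the SOS2 constraint with d = 4: a vector λ ∈ Δ^5 satisfies supp(λ) ⊆ {i, i+1} for some i ∈ {1,2,3,4} if and only if there exists y ∈ {0,1}^2 with λ_3 ≤ y_1, λ_1 + λ_5 ≤ 1 − y_1, λ_4 + λ_5 ≤ y_2, and λ_1 + λ_2 ≤ 1 − y_2. -/
/-- The logarithmic independent branching formulation for the SOS2 constraint
with `d = 4` (indices 0-based: `λ_1,…,λ_5` become `lam 0,…,lam 4`):
`λ ∈ Δ^5` has `supp(λ) ⊆ {i,i+1}` for some `i` iff there is `y ∈ {0,1}^2` with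
`λ_3 ≤ y_1`, `λ_1 + λ_5 ≤ 1 − y_1`, `λ_4 + λ_5 ≤ y_2`, `λ_1 + λ_2 ≤ 1 − y_2`. -/
theorem logIB_sos2_d4 (lam : Fin 5 → ℝ) :
    ((∀ j, 0 ≤ lam j) ∧ ∑ j, lam j = 1 ∧
      ∃ i : Fin 4, ∀ j : Fin 5, lam j ≠ 0 → (j : ℕ) = (i : ℕ) ∨ (j : ℕ) = (i : ℕ) + 1)
    ↔ ((∀ j, 0 ≤ lam j) ∧ ∑ j, lam j = 1 ∧
        ∃ y : Fin 2 → ℝ, (∀ k, y k = 0 ∨ y k = 1) ∧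
          lam 2 ≤ y 0 ∧ lam 0 + lam 4 ≤ 1 - y 0 ∧
          lam 3 + lam 4 ≤ y 1 ∧ lam 0 + lam 1 ≤ 1 - y 1) := by
  constructor
  · rintro ⟨hn, hs, i, h⟩
    refine ⟨hn, hs, ?_⟩
    rw [Fin.sum_univ_five] at hs
    have h0 := hn 0; have h1 := hn 1; have h2 := hn 2
    have h3 := hn 3; have h4 := hn 4
    have hz : ∀ j : Fin 5, ¬((j : ℕ) = (i : ℕ) ∨ (j : ℕ) = (i : ℕ) + 1) → lam j = 0 := by
      intro j hj; by_contra hne; exact hj (h j hne)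
    fin_cases i
    · have e2 : lam 2 = 0 := hz 2 (by decide)
      have e3 : lam 3 = 0 := hz 3 (by decide)
      have e4 : lam 4 = 0 := hz 4 (by decide)
      exact ⟨![0, 0], by intro k; fin_cases k <;> simp, by simp; linarith,
        by simp; linarith, by simp; linarith, by simp; linarith⟩
    · have e0 : lam 0 = 0 := hz 0 (by decide)
      have e3 : lam 3 = 0 := hz 3 (by decide)
      have e4 : lam 4 = 0 := hz 4 (by decide)
      exact ⟨![1, 0], by intro k; fin_cases k <;> simp, by simp; linarith,
        by simp; linarith, by simp; linarith, by simp; linarith⟩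
    · have e0 : lam 0 = 0 := hz 0 (by decide)
      have e1 : lam 1 = 0 := hz 1 (by decide)
      have e4 : lam 4 = 0 := hz 4 (by decide)
      exact ⟨![1, 1], by intro k; fin_cases k <;> simp, by simp; linarith,
        by simp; linarith, by simp; linarith, by simp; linarith⟩
    · have e0 : lam 0 = 0 := hz 0 (by decide)
      have e1 : lam 1 = 0 := hz 1 (by decide)
      have e2 : lam 2 = 0 := hz 2 (by decide)
      exact ⟨![0, 1], by intro k; fin_cases k <;> simp, by simp; linarith,
        by simp; linarith, by simp; linarith, by simp; linarith⟩
  · rintro ⟨hn, hs, y, hy, c1, c2, c3, c4⟩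
    refine ⟨hn, hs, ?_⟩
    have h0 := hn 0; have h1 := hn 1; have h2 := hn 2
    have h3 := hn 3; have h4 := hn 4
    rcases hy 0 with y0 | y0 <;> rcases hy 1 with y1 | y1 <;>
      rw [y0] at c1 c2 <;> rw [y1] at c3 c4
    · -- y = (0,0): lam 2 = lam 3 = lam 4 = 0, i = 0
      have e2 : lam 2 = 0 := le_antisymm c1 h2
      have e3 : lam 3 = 0 := by linarith
      have e4 : lam 4 = 0 := by linarith
      refine ⟨0, fun j hne => ?_⟩
      fin_cases j
      · exact Or.inl rfl
      · exact Or.inr rfl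
      · exact absurd e2 hne
      · exact absurd e3 hne
      · exact absurd e4 hne
    · -- y = (0,1): lam 2 = lam 0 = lam 1 = 0, i = 3
      have e2 : lam 2 = 0 := le_antisymm c1 h2
      have e0 : lam 0 = 0 := by linarith
      have e1 : lam 1 = 0 := by linarith
      refine ⟨3, fun j hne => ?_⟩
      fin_cases j
      · exact absurd e0 hne
      · exact absurd e1 hne
      · exact absurd e2 hne
      · exact Or.inl rfl
      · exact Or.inr rfl
    · -- y = (1,0): lam 0 = lam 4 = lam 3 = 0, i = 1
      have e0 : lam 0 = 0 := by linarith
      have e4 : lam 4 = 0 := by linarith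
      have e3 : lam 3 = 0 := by linarith
      refine ⟨1, fun j hne => ?_⟩
      fin_cases j
      · exact absurd e0 hne
      · exact Or.inl rfl
      · exact Or.inr rfl
      · exact absurd e3 hne
      · exact absurd e4 hne
    · -- y = (1,1): lam 0 = lam 4 = lam 1 = 0, i = 2
      have e0 : lam 0 = 0 := by linarith
      have e4 : lam 4 = 0 := by linarith
      have e1 : lam 1 = 0 := by linarith
      refine ⟨2, fun j hne => ?_⟩
      fin_cases j
      · exact absurd e0 hne
      · exact absurd e1 hne
      · exact Or.inl rfl
      · exact Or.inr rfl
      · exact absurd e4 hne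
end

section
/- For the SOS2 constraint with d = 3: a vector λ ∈ Δ^4 satisfies supp(λ) ⊆ {i,i+1} for some i ∈ {1,2,3} if and only if there exists y ∈ {0,1}^2 with λ_3 + λ_4 ≤ y_1 ≤ λ_2 + λ_3 + λ_4 and λ_4 ≤ y_2 ≤ λ_3 + λ_4. -/
/-- The logarithmic embedding (Log) formulation for the SOS2 constraint with
`d = 3` (0-indexed: `λ_1,…,λ_4` become `lam 0,…,lam 3`):
`λ ∈ Δ^4` has `supp(λ) ⊆ {i,i+1}` for some `i` iff there is `y ∈ {0,1}^2` with
`λ_3 + λ_4 ≤ y_1 ≤ λ_2 + λ_3 + λ_4` and `λ_4 ≤ y_2 ≤ λ_3 + λ_4`. -/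
theorem log_sos2_d3 (lam : Fin 4 → ℝ) :
    ((∀ j, 0 ≤ lam j) ∧ ∑ j, lam j = 1 ∧
      ∃ i : Fin 3, ∀ j : Fin 4, lam j ≠ 0 → (j : ℕ) = (i : ℕ) ∨ (j : ℕ) = (i : ℕ) + 1)
    ↔ ((∀ j, 0 ≤ lam j) ∧ ∑ j, lam j = 1 ∧
        ∃ y : Fin 2 → ℝ, (∀ k, y k = 0 ∨ y k = 1) ∧
          lam 2 + lam 3 ≤ y 0 ∧ y 0 ≤ lam 1 + lam 2 + lam 3 ∧
          lam 3 ≤ y 1 ∧ y 1 ≤ lam 2 + lam 3) := by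
  constructor
  · rintro ⟨hpos, hsum, i, hi⟩
    refine ⟨hpos, hsum, ?_⟩
    rw [Fin.sum_univ_four] at hsum
    have h0 := hpos 0; have h1 := hpos 1; have h2 := hpos 2; have h3 := hpos 3
    fin_cases i
    · have e2 : lam 2 = 0 := by
        by_contra h; rcases hi 2 h with h' | h' <;> exact absurd h' (by decide)
      have e3 : lam 3 = 0 := by
        by_contra h; rcases hi 3 h with h' | h' <;> exact absurd h' (by decide)
      refine ⟨![0, 0], fun k => by fin_cases k <;> simp, ?_, ?_, ?_, ?_⟩ <;>
        simp <;> linarith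
    · have e0 : lam 0 = 0 := by
        by_contra h; rcases hi 0 h with h' | h' <;> exact absurd h' (by decide)
      have e3 : lam 3 = 0 := by
        by_contra h; rcases hi 3 h with h' | h' <;> exact absurd h' (by decide)
      refine ⟨![1, 0], fun k => by fin_cases k <;> simp, ?_, ?_, ?_, ?_⟩ <;>
        simp <;> linarith
    · have e0 : lam 0 = 0 := by
        by_contra h; rcases hi 0 h with h' | h' <;> exact absurd h' (by decide)
      have e1 : lam 1 = 0 := by
        by_contra h; rcases hi 1 h with h' | h' <;> exact absurd h' (by decide)
      refine ⟨![1, 1], fun k => by fin_cases k <;> simp, ?_, ?_, ?_, ?_⟩ <;>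
        simp <;> linarith
  · rintro ⟨hpos, hsum, y, hy, h1, h2, h3, h4⟩
    refine ⟨hpos, hsum, ?_⟩
    rw [Fin.sum_univ_four] at hsum
    have p0 := hpos 0; have p1 := hpos 1; have p2 := hpos 2; have p3 := hpos 3
    rcases hy 0 with e0 | e0 <;> rcases hy 1 with e1 | e1 <;>
      rw [e0] at h1 h2 <;> rw [e1] at h3 h4
    · have e2 : lam 2 = 0 := by linarith
      have e3 : lam 3 = 0 := by linarith
      exact ⟨0, fun j hj => by fin_cases j <;> simp_all⟩
    · exact absurd h4 (by linarith)
    · have e3 : lam 3 = 0 := by linarith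
      have e0' : lam 0 = 0 := by linarith
      exact ⟨1, fun j hj => by fin_cases j <;> simp_all⟩
    · have e0' : lam 0 = 0 := by linarith
      have e1' : lam 1 = 0 := by linarith
      exact ⟨2, fun j hj => by fin_cases j <;> simp_all⟩
end

section
/- For the SOS2 constraint with d = 4 and encoding C^2 = ((0,0),(1,0),(1,1),(2,1)): λ ∈ Δ^5 satisfies supp(λ) ⊆ {i,i+1} for some i ∈ {1,…,4} if and only if there exists y ∈ Z × Z with λ_3 + λ_4 + 2λ_5 ≤ y_1 ≤ λ_2 + λ_3 + 2λ_4 + 2λ_5, λ_4 + λ_5 ≤ y_2 ≤ λ_3 + λ_4 + λ_5, 0 ≤ y_1 ≤ 2, and 0 ≤ y_2 ≤ 1. -/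
/-- The general-integer zig-zag (ZZI) formulation for SOS2 with `d = 4`
(0-indexed: `λ_1,…,λ_5` become `lam 0,…,lam 4`), using the encoding
`C^2 = ((0,0),(1,0),(1,1),(2,1))`. -/
theorem zzi_sos2_d4 (lam : Fin 5 → ℝ) :
    ((∀ j, 0 ≤ lam j) ∧ ∑ j, lam j = 1 ∧
      ∃ i : Fin 4, ∀ j : Fin 5, lam j ≠ 0 → (j : ℕ) = (i : ℕ) ∨ (j : ℕ) = (i : ℕ) + 1)
    ↔ ((∀ j, 0 ≤ lam j) ∧ ∑ j, lam j = 1 ∧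
        ∃ y : Fin 2 → ℤ,
          lam 2 + lam 3 + 2 * lam 4 ≤ (y 0 : ℝ) ∧
          (y 0 : ℝ) ≤ lam 1 + lam 2 + 2 * lam 3 + 2 * lam 4 ∧
          lam 3 + lam 4 ≤ (y 1 : ℝ) ∧
          (y 1 : ℝ) ≤ lam 2 + lam 3 + lam 4 ∧
          0 ≤ y 0 ∧ y 0 ≤ 2 ∧ 0 ≤ y 1 ∧ y 1 ≤ 1) := by
  constructor
  · rintro ⟨hnn, hsum, i, hi⟩
    refine ⟨hnn, hsum, ?_⟩
    rw [Fin.sum_univ_five] at hsum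
    have hz : ∀ j : Fin 5, ¬((j : ℕ) = (i : ℕ) ∨ (j : ℕ) = (i : ℕ) + 1) → lam j = 0 := by
      intro j hj
      by_contra h
      exact hj (hi j h)
    fin_cases i
    · have h2 : lam 2 = 0 := hz 2 (by decide)
      have h3 : lam 3 = 0 := hz 3 (by decide)
      have h4 : lam 4 = 0 := hz 4 (by decide)
      refine ⟨![0, 0], ?_⟩
      have := hnn 1
      have := hnn 2
      norm_num [h2, h3, h4]
      linarith
    · have h0 : lam 0 = 0 := hz 0 (by decide)
      have h3 : lam 3 = 0 := hz 3 (by decide)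
      have h4 : lam 4 = 0 := hz 4 (by decide)
      refine ⟨![1, 0], ?_⟩
      have := hnn 1
      have := hnn 2
      norm_num [h0, h3, h4] at hsum ⊢
      and_intros <;> linarith
    · have h0 : lam 0 = 0 := hz 0 (by decide)
      have h1 : lam 1 = 0 := hz 1 (by decide)
      have h4 : lam 4 = 0 := hz 4 (by decide)
      refine ⟨![1, 1], ?_⟩
      have := hnn 2
      have := hnn 3
      norm_num [h0, h1, h4] at hsum ⊢
      and_intros <;> linarith
    · have h0 : lam 0 = 0 := hz 0 (by decide)
      have h1 : lam 1 = 0 := hz 1 (by decide)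
      have h2 : lam 2 = 0 := hz 2 (by decide)
      refine ⟨![2, 1], ?_⟩
      have := hnn 3
      have := hnn 4
      norm_num [h0, h1, h2] at hsum ⊢
      and_intros <;> linarith
  · rintro ⟨hnn, hsum, y, hb1, hb2, hb3, hb4, hy0l, hy0u, hy1l, hy1u⟩
    refine ⟨hnn, hsum, ?_⟩
    rw [Fin.sum_univ_five] at hsum
    have n0 := hnn 0; have n1 := hnn 1; have n2 := hnn 2
    have n3 := hnn 3; have n4 := hnn 4
    interval_cases h0 : y 0 <;> interval_cases h1 : y 1 <;>
      push_cast at hb1 hb2 hb3 hb4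
    -- y0 = 0, y1 = 0
    · refine ⟨0, fun j hj => ?_⟩
      have h2 : lam 2 = 0 := by linarith
      have h3 : lam 3 = 0 := by linarith
      have h4 : lam 4 = 0 := by linarith
      fin_cases j <;> first | decide | simp_all
    -- y0 = 0, y1 = 1 : impossible (lam2=lam3=lam4=0 but 1 ≤ lam2+lam3+lam4)
    · exfalso; linarith
    -- y0 = 1, y1 = 0
    · refine ⟨1, fun j hj => ?_⟩
      have h3 : lam 3 = 0 := by linarith
      have h4 : lam 4 = 0 := by linarith
      have h0' : lam 0 = 0 := by linarith
      fin_cases j <;> first | decide | simp_all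
    -- y0 = 1, y1 = 1
    · refine ⟨2, fun j hj => ?_⟩
      have h0' : lam 0 = 0 := by linarith
      have h1' : lam 1 = 0 := by linarith
      have h4 : lam 4 = 0 := by linarith
      fin_cases j <;> first | decide | simp_all
    -- y0 = 2, y1 = 0
    · refine ⟨3, fun j hj => ?_⟩
      have h0' : lam 0 = 0 := by linarith
      have h1' : lam 1 = 0 := by linarith
      have h2 : lam 2 = 0 := by linarith
      fin_cases j <;> first | decide | simp_all
    -- y0 = 2, y1 = 1
    · refine ⟨3, fun j hj => ?_⟩
      have h0' : lam 0 = 0 := by linarith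
      have h1' : lam 1 = 0 := by linarith
      have h2 : lam 2 = 0 := by linarith
      fin_cases j <;> first | decide | simp_all
end

section
/- Let λ ∈ Δ^5 and y ∈ [0,1]^2 (the Log formulation with the integrality of y relaxed) satisfy the Log formulation constraints λ_3 ≤ y_1 ≤ λ_2 + λ_3 + λ_4 and λ_4 + λ_5 ≤ y_2 ≤ λ_3 + λ_4 + λ_5. Then the additional bound constraint y_1 ≤ 0 implies λ_3 = 0, and the constraint y_1 ≥ 1 implies λ_1 = λ_5 = 0. -/
/-- LP relaxation of the Log formulation for SOS2 with `d = 4` (0-indexed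
`lam`, `y ∈ [0,1]^2`): after branching, `y_1 ≤ 0` implies `λ_3 = 0`, and
`y_1 ≥ 1` implies `λ_1 = λ_5 = 0`. -/
theorem log_branching (lam : Fin 5 → ℝ) (y : Fin 2 → ℝ)
    (hpos : ∀ j, 0 ≤ lam j) (hsum : ∑ j, lam j = 1)
    (hy : ∀ k, 0 ≤ y k ∧ y k ≤ 1)
    (h1l : lam 2 ≤ y 0) (h1u : y 0 ≤ lam 1 + lam 2 + lam 3)
    (h2l : lam 3 + lam 4 ≤ y 1) (h2u : y 1 ≤ lam 2 + lam 3 + lam 4) :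
    (y 0 ≤ 0 → lam 2 = 0) ∧ (1 ≤ y 0 → lam 0 = 0 ∧ lam 4 = 0) := by
  have h0 := hpos 0
  have h1 := hpos 1
  have h2 := hpos 2
  have h3 := hpos 3
  have h4 := hpos 4
  simp [Fin.sum_univ_five] at hsum
  constructor
  · intro h; linarith
  · intro h; constructor <;> linarith
end

section
/- Let V be a finite set and for each i ∈ {1,…,r} let S^i = ∪_{j=1}^{s_i} P(T^{i,j}) with T^{i,j} ⊆ V and ∪_j T^{i,j} = V, where P(T) = {λ ∈ Δ^V : supp(λ) ⊆ T}. Suppose for each i there is a polyhedron R^i ⊆ R^V × R^{r_i} such that {(λ,y) ∈ R^i : y ∈ Z^{r_i}} projects onto S^i in λ (validity), Proj_λ(R^i) = conv(S^i) (sharpness), and all extreme points of R^i have integral y (idealness). Then the combined polyhedron R = {(λ, y^1, …, y^r) : (λ, y^i) ∈ R^i for all i} is sharp for ∩_{i=1}^r S^i: Proj_λ(R) = conv(∩_{i=1}^r S^i) = Δ^V. -/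
/-!
Every `Sⁱ` lies in the simplex and contains all of its vertices, since every `v` lies in some
`T^{i,j}`; hence so does `⋂ᵢ Sⁱ`, and all these sets have the simplex as convex hull. A point
lies in the projection of the combined relaxation iff it lies in every `Proj_λ(Rⁱ) = conv(Sⁱ)`,
i.e. in the simplex.
-/

theorem convexHull_eq_stdSimplex_of_single_mem {V : Type*} [Fintype V] [DecidableEq V]
    {A : Set (V → ℝ)} (hA : A ⊆ stdSimplex ℝ V) (hsingle : ∀ v, Pi.single v 1 ∈ A) :
    convexHull ℝ A = stdSimplex ℝ V := by
  refine (convexHull_min hA (convex_stdSimplex ℝ V)).antisymm ?_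
  rw [← convexHull_rangle_single_eq_stdSimplex]
  exact convexHull_mono (Set.range_subset_iff.2 hsingle)

theorem single_mem_of_cover {V ι : Type*} [Fintype V] [DecidableEq V] (T : ι → Finset V)
    (hcover : ∀ v, ∃ j, v ∈ T j) (v : V) :
    Pi.single v 1 ∈ {lam | lam ∈ stdSimplex ℝ V ∧ ∃ j, ∀ w, lam w ≠ 0 → w ∈ T j} := by
  obtain ⟨j, hj⟩ := hcover v
  refine ⟨single_mem_stdSimplex ℝ v, j, fun w hw => ?_⟩
  obtain rfl : w = v := by by_contra hwv; exact hw (Pi.single_eq_of_ne hwv 1)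
  exact hj

theorem setOf_forall_exists_mem_eq_iInter_image_fst {ι α : Type*} {β : ι → Type*}
    (R : (i : ι) → Set (α × β i)) :
    {x | ∀ i, ∃ y, (x, y) ∈ R i} = ⋂ i, Prod.fst '' R i := by
  ext x
  simp

theorem combined_formulation_sharp_general
    {V : Type*} [Fintype V] {r : ℕ} (hr : 1 ≤ r)
    (s ri : Fin r → ℕ)
    (T : (i : Fin r) → Fin (s i) → Finset V)
    (hcover : ∀ i (v : V), ∃ j, v ∈ T i j)
    (S : Fin r → Set (V → ℝ))
    (hS : ∀ i, S i = {lam | lam ∈ stdSimplex ℝ V ∧ ∃ j, ∀ v, lam v ≠ 0 → v ∈ T i j})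
    (R : (i : Fin r) → Set ((V → ℝ) × (Fin (ri i) → ℝ)))
    (hsharp : ∀ i, Prod.fst '' R i = convexHull ℝ (S i)) :
    {lam : V → ℝ | ∀ i, ∃ y, (lam, y) ∈ R i} = convexHull ℝ (⋂ i, S i) ∧
    convexHull ℝ (⋂ i, S i) = stdSimplex ℝ V := by
  classical
  have : Nonempty (Fin r) := ⟨⟨0, hr⟩⟩
  have hsub : ∀ i, S i ⊆ stdSimplex ℝ V := fun i => by rw [hS i]; exact fun _ h => h.1
  have hsingle : ∀ i v, Pi.single v 1 ∈ S i := fun i v => by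
    rw [hS i]; exact single_mem_of_cover (T i) (hcover i) v
  have hhull : ∀ i, convexHull ℝ (S i) = stdSimplex ℝ V := fun i =>
    convexHull_eq_stdSimplex_of_single_mem (hsub i) (hsingle i)
  have hInter : convexHull ℝ (⋂ i, S i) = stdSimplex ℝ V :=
    convexHull_eq_stdSimplex_of_single_mem ((Set.iInter_subset _ ⟨0, hr⟩).trans (hsub _))
      fun v => Set.mem_iInter.2 fun i => hsingle i v
  refine ⟨?_, hInter⟩
  simp_rw [hInter, setOf_forall_exists_mem_eq_iInter_image_fst, hsharp, hhull, Set.iInter_const]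

/-- Sharpness of the intersection of sharp formulations of combinatorial
disjunctive constraints: if each `Rⁱ` is a (convex) sharp, valid, ideal
formulation of `Sⁱ = ∪_j P(T^{i,j})` with `∪_j T^{i,j} = V`, then the combined
relaxation `R = {(λ,y¹,…,yʳ) : (λ,yⁱ) ∈ Rⁱ ∀i}` projects in `λ` onto
`conv(∩_i Sⁱ) = Δ^V`. -/
theorem combined_formulation_sharp
    {V : Type*} [Fintype V] [DecidableEq V] {r : ℕ} (hr : 1 ≤ r)
    (s ri : Fin r → ℕ)
    (T : (i : Fin r) → Fin (s i) → Finset V)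
    (hcover : ∀ i (v : V), ∃ j, v ∈ T i j)
    (S : Fin r → Set (V → ℝ))
    (hS : ∀ i, S i = {lam | lam ∈ stdSimplex ℝ V ∧ ∃ j, ∀ v, lam v ≠ 0 → v ∈ T i j})
    (R : (i : Fin r) → Set ((V → ℝ) × (Fin (ri i) → ℝ)))
    (hconv : ∀ i, Convex ℝ (R i))
    (hvalid : ∀ i, {lam | ∃ y, (lam, y) ∈ R i ∧ ∀ k, ∃ z : ℤ, y k = (z : ℝ)} = S i)
    (hsharp : ∀ i, Prod.fst '' R i = convexHull ℝ (S i))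
    (hideal : ∀ i, ∀ p ∈ Set.extremePoints ℝ (R i), ∀ k, ∃ z : ℤ, p.2 k = (z : ℝ)) :
    {lam : V → ℝ | ∀ i, ∃ y, (lam, y) ∈ R i} = convexHull ℝ (⋂ i, S i) ∧
    convexHull ℝ (⋂ i, S i) = stdSimplex ℝ V :=
  combined_formulation_sharp_general hr s ri T hcover S hS R hsharp
end

section
/- Let V be finite, and for i ∈ {1,…,r} let R^i ⊆ R^V × R^{r_i} be polytopes whose extreme points all have the form (e^v, h) for some v ∈ V and h ∈ Z^{r_i} (where e^v is a vertex of the simplex Δ^V). Then every extreme point (λ, y^1, …, y^r) of R = {(λ, y^1,…,y^r) : (λ, y^i) ∈ R^i ∀i} satisfies λ = e^v for some v ∈ V and y^i ∈ Z^{r_i} for all i. -/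
/-!
Each `Rⁱ` is the convex hull of its extreme points `(e^v, h)`, of which there are finitely many
since they are integral and bounded. Grouping them by `v` writes every `(λ, yⁱ) ∈ Rⁱ` as
`∑_v λ_v • (e^v, yⁱ_v)` with `(e^v, yⁱ_v) ∈ Rⁱ`. The weights `λ_v` do not depend on `i`, so an
extreme point of `R` is the convex combination `∑_v λ_v • (e^v, (yⁱ_v)ᵢ)` of points of `R` and
must equal each term of positive weight: `λ = e^v`. Finally `e^v` is extreme in the simplex,
which contains the projection of `Rⁱ`, and `yⁱ` is extreme in the fibre of `Rⁱ` over `e^v`, so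
`(e^v, yⁱ)` is an extreme point of `Rⁱ` and `yⁱ` is integral.
-/

open Set Finset Bornology

section Extreme

variable {𝕜 E F : Type*}

section OrderedSemiring

variable [Semiring 𝕜] [PartialOrder 𝕜] [AddCommMonoid E] [Module 𝕜 E] [AddCommMonoid F]
  [Module 𝕜 F]

theorem mk_mem_extremePoints_of_mem_extremePoints_fiber {s : Set (E × F)} {a : E} {b : F}
    (ha : a ∈ (Prod.fst '' s).extremePoints 𝕜) (hb : b ∈ {y | (a, y) ∈ s}.extremePoints 𝕜) :
    (a, b) ∈ s.extremePoints 𝕜 := by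
  refine ⟨hb.1, fun x₁ hx₁ x₂ hx₂ hx => ?_⟩
  obtain ⟨c₁, c₂, hc₁, hc₂, hc, hcx⟩ := hx
  have hfst := (mem_extremePoints.1 ha).2 _ (mem_image_of_mem _ hx₁) _ (mem_image_of_mem _ hx₂)
    ⟨c₁, c₂, hc₁, hc₂, hc, congrArg Prod.fst hcx⟩
  have hsnd := hb.2 (show (a, x₁.2) ∈ s from hfst.1 ▸ hx₁) (show (a, x₂.2) ∈ s from hfst.2 ▸ hx₂)
    ⟨c₁, c₂, hc₁, hc₂, hc, congrArg Prod.snd hcx⟩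
  exact Prod.ext hfst.1 hsnd

end OrderedSemiring

variable [Field 𝕜] [LinearOrder 𝕜] [IsStrictOrderedRing 𝕜] [AddCommGroup E] [Module 𝕜 E]

theorem extremePoints_univ [Nontrivial E] : (univ : Set E).extremePoints 𝕜 = ∅ := by
  refine eq_empty_of_forall_notMem fun p hp => ?_
  obtain ⟨c, hc⟩ := exists_ne (0 : E)
  have hseg : p ∈ openSegment 𝕜 (p + c) (p - c) :=
    ⟨1 / 2, 1 / 2, by norm_num, by norm_num, by norm_num, by module⟩
  exact hc (by simpa using hp.2 (mem_univ _) (mem_univ _) hseg)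

theorem Finset.sum_smul_centerMass_of_nonneg {ι : Type*} {t : Finset ι} {w : ι → 𝕜}
    (hw : ∀ i ∈ t, 0 ≤ w i) (z : ι → E) :
    (∑ i ∈ t, w i) • t.centerMass w z = ∑ i ∈ t, w i • z i := by
  rcases (sum_nonneg hw).eq_or_lt with h | h
  · rw [← h, zero_smul, eq_comm]
    exact sum_eq_zero fun i hi => by rw [(sum_eq_zero_iff_of_nonneg hw).1 h.symm i hi, zero_smul]
  · exact smul_inv_smul₀ h.ne' _

theorem Convex.eq_of_mem_extremePoints_of_sum_smul_eq {ι : Type*} {C : Set E} {p : E}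
    {t : Finset ι} {w : ι → 𝕜} {z : ι → E} (hC : Convex 𝕜 C) (hp : p ∈ C.extremePoints 𝕜)
    (hw₀ : ∀ j ∈ t, 0 ≤ w j) (hw₁ : ∑ j ∈ t, w j = 1) (hz : ∀ j ∈ t, 0 < w j → z j ∈ C)
    (hsum : ∑ j ∈ t, w j • z j = p) {j : ι} (hj : j ∈ t) (hwj : 0 < w j) : z j = p := by
  classical
  by_contra hne
  set t₁ := t.filter fun k => 0 < w k ∧ z k ≠ p
  set W := ∑ k ∈ t₁, w k
  have hW : 0 < W := hwj.trans_le <| single_le_sum (fun k hk => hw₀ k (mem_filter.1 hk).1)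
    (mem_filter.2 ⟨hj, hwj, hne⟩)
  -- `C \ {p}` is convex, so the part of the combination avoiding `p` stays away from `p`
  have hc : t₁.centerMass w z ∈ C \ {p} :=
    ((hC.mem_extremePoints_iff_convex_sdiff.1 hp).2).centerMass_mem
      (fun k hk => hw₀ k (mem_filter.1 hk).1) hW fun k hk =>
        ⟨hz k (mem_filter.1 hk).1 (mem_filter.1 hk).2.1, (mem_filter.1 hk).2.2⟩
  have hrest : ∑ k ∈ t.filter (fun k => ¬(0 < w k ∧ z k ≠ p)), w k • z k = (1 - W) • p := by
    rw [← hw₁, ← sum_filter_add_sum_filter_not t (fun k => 0 < w k ∧ z k ≠ p) w,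
      add_sub_cancel_left, sum_smul]
    refine sum_congr rfl fun k hk => ?_
    obtain ⟨hkt, hk⟩ := mem_filter.1 hk
    rcases (hw₀ k hkt).eq_or_lt with h | h
    · simp [← h]
    · rw [not_and_not_right.1 hk h]
  have hsplit : p = (1 - W) • p + W • t₁.centerMass w z := by
    rw [centerMass, smul_inv_smul₀ hW.ne', ← hrest, add_comm, sum_filter_add_sum_filter_not, hsum]
  refine hc.2 (smul_right_injective E hW.ne' ?_)
  linear_combination (norm := module) hsplit.symm

end Extreme

section StdSimplex

variable {𝕜 V F : Type*} [Field 𝕜] [LinearOrder 𝕜] [IsStrictOrderedRing 𝕜] [Fintype V]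
  [DecidableEq V]

theorem eq_single_of_mem_stdSimplex_of_apply_eq_one {x : V → 𝕜} (hx : x ∈ stdSimplex 𝕜 V)
    {v : V} (hxv : x v = 1) : x = Pi.single v 1 := by
  have hrest : ∑ u ∈ univ.erase v, x u = 0 := by
    have := add_sum_erase univ x (mem_univ v)
    rw [hx.2, hxv] at this
    linarith
  funext u
  rcases eq_or_ne u v with rfl | huv
  · simp [hxv]
  · rw [Pi.single_eq_of_ne huv]
    exact (sum_eq_zero_iff_of_nonneg fun u _ => hx.1 u).1 hrest u (mem_erase.2 ⟨huv, mem_univ u⟩)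

theorem single_mem_extremePoints_stdSimplex (v : V) :
    Pi.single v 1 ∈ (stdSimplex 𝕜 V).extremePoints 𝕜 := by
  refine ⟨single_mem_stdSimplex 𝕜 v, fun x hx y hy ⟨a, b, ha, hb, hab, hxy⟩ => ?_⟩
  have hv : a * x v + b * y v = 1 := by simpa using congrFun hxy v
  have hxv := (mem_Icc_of_mem_stdSimplex hx v).2
  have hyv := (mem_Icc_of_mem_stdSimplex hy v).2
  refine eq_single_of_mem_stdSimplex_of_apply_eq_one hx ?_
  nlinarith [mul_le_mul_of_nonneg_left hyv hb.le]

variable [AddCommGroup F] [Module 𝕜 F]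

theorem fst_mem_stdSimplex_of_mem_convexHull {x : (V → 𝕜) × F}
    (hx : x ∈ convexHull 𝕜 (Prod.fst ⁻¹' range fun v => Pi.single v 1)) :
    x.1 ∈ stdSimplex 𝕜 V :=
  convexHull_min (by rintro q ⟨v, hv⟩; simpa [← hv] using single_mem_stdSimplex 𝕜 v)
    ((convex_stdSimplex 𝕜 V).linear_preimage (LinearMap.fst 𝕜 _ F)) hx

theorem exists_snd_eq_sum_smul_of_mem_convexHull {s : Set ((V → 𝕜) × F)} (hs : Convex 𝕜 s)
    {x : (V → 𝕜) × F} (hx : x ∈ convexHull 𝕜 (s ∩ Prod.fst ⁻¹' range fun v => Pi.single v 1)) :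
    ∃ y : V → F, (∀ v, 0 < x.1 v → (Pi.single v 1, y v) ∈ s) ∧ x.2 = ∑ v, x.1 v • y v := by
  obtain ⟨ι, _, w, z, hw₀, -, hz, rfl⟩ := mem_convexHull_iff_exists_fintype.1 hx
  choose φ hφ using fun i => (hz i).2
  have hweight : ∀ v, (∑ i, w i • z i).1 v = ∑ i with φ i = v, w i := by
    intro v
    simp [Prod.fst_sum, Finset.sum_apply, ← hφ, Pi.single_apply, sum_filter, eq_comm]
  refine ⟨fun v => ({i | φ i = v} : Finset ι).centerMass w (Prod.snd ∘ z), fun v hv => ?_, ?_⟩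
  · rw [hweight] at hv
    convert hs.centerMass_mem (fun i _ => hw₀ i) hv fun i _ => (hz i).1 using 1
    refine Prod.ext ?_ (by simp [centerMass, Prod.snd_sum])
    calc Pi.single v 1
        = ({i | φ i = v} : Finset ι).centerMass w (Function.const ι (Pi.single v 1)) :=
          (centerMass_const hv.ne' _).symm
      _ = ({i | φ i = v} : Finset ι).centerMass w (fun i => (z i).1) :=
          centerMass_congr_fun fun i hi _ => by rw [← hφ, (mem_filter.1 hi).2]; rfl
      _ = _ := by simp [centerMass, Prod.fst_sum]
  · simp only [hweight, sum_smul_centerMass_of_nonneg (fun i _ => hw₀ i), Prod.snd_sum,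
      Prod.smul_snd, Function.comp_apply]
    exact (sum_fiberwise univ φ _).symm

end StdSimplex

theorem Bornology.IsBounded.finite_inter_setOf_int {ι : Type*} [Fintype ι] {S : Set (ι → ℝ)}
    (hS : IsBounded S) : (S ∩ {y | ∀ k, ∃ z : ℤ, y k = z}).Finite := by
  convert ZSpan.setFinite_inter (Pi.basisFun ℝ ι) hS using 2
  ext y
  simp [Module.Basis.mem_span_iff_repr_mem, eq_comm]

theorem subset_convexHull_inter_fst_preimage_range_single {V ι : Type*} [Fintype V]
    [DecidableEq V] [Fintype ι] {s : Set ((V → ℝ) × (ι → ℝ))} (hconv : Convex ℝ s)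
    (hcomp : IsCompact s)
    (hext : ∀ p ∈ s.extremePoints ℝ, (∃ v, p.1 = Pi.single v 1) ∧ ∀ k, ∃ z : ℤ, p.2 k = z) :
    s ⊆ convexHull ℝ (s ∩ Prod.fst ⁻¹' range fun v => Pi.single v 1) := by
  have hfin : (s.extremePoints ℝ).Finite := by
    refine ((finite_range fun v => Pi.single v (1 : ℝ)).prod
      (hcomp.image continuous_snd).isBounded.finite_inter_setOf_int).subset ?_
    intro p hp
    obtain ⟨⟨v, hv⟩, hint⟩ := hext p hp
    exact ⟨⟨v, hv.symm⟩, mem_image_of_mem _ hp.1, hint⟩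
  calc s = convexHull ℝ (s.extremePoints ℝ) :=
        (closure_convexHull_extremePoints hcomp hconv).symm.trans
          (hfin.isClosed_convexHull (𝕜 := ℝ)).closure_eq
    _ ⊆ _ := convexHull_mono fun p hp => by
      obtain ⟨v, hv⟩ := (hext p hp).1
      exact ⟨hp.1, v, hv.symm⟩

def combinedSet {E ι : Type*} {F : ι → Type*} (R : ∀ i, Set (E × F i)) : Set (E × ∀ i, F i) :=
  {q | ∀ i, (q.1, q.2 i) ∈ R i}

section CombinedSet

variable {𝕜 E ι : Type*} {F : ι → Type*} {R : ∀ i, Set (E × F i)}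

theorem combinedSet_eq_univ [IsEmpty ι] : combinedSet R = univ :=
  eq_univ_of_forall fun _ i => isEmptyElim i

variable [Semiring 𝕜] [PartialOrder 𝕜] [AddCommMonoid E] [Module 𝕜 E]
  [∀ i, AddCommMonoid (F i)] [∀ i, Module 𝕜 (F i)]

theorem Convex.combinedSet (hR : ∀ i, Convex 𝕜 (R i)) : Convex 𝕜 (combinedSet R) :=
  fun _ hx _ hy _ _ ha hb hab i => hR i (hx i) (hy i) ha hb hab

theorem snd_apply_mem_extremePoints_fiber [DecidableEq ι] {p : E × ∀ i, F i}
    (hp : p ∈ (combinedSet R).extremePoints 𝕜) (i : ι) :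
    p.2 i ∈ {y | (p.1, y) ∈ R i}.extremePoints 𝕜 := by
  refine ⟨hp.1 i, fun y₁ hy₁ y₂ hy₂ ⟨a, b, ha, hb, hab, hy⟩ => ?_⟩
  have hmem : ∀ y ∈ {y | (p.1, y) ∈ R i}, (p.1, Function.update p.2 i y) ∈ combinedSet R := by
    intro y hy j
    rcases eq_or_ne j i with rfl | hji
    · simpa using hy
    · simpa [Function.update_of_ne hji] using hp.1 j
  have hseg : p ∈ openSegment 𝕜 (p.1, Function.update p.2 i y₁)
      (p.1, Function.update p.2 i y₂) := by
    refine ⟨a, b, ha, hb, hab, Prod.ext (Convex.combo_self hab _) (funext fun j => ?_)⟩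
    rcases eq_or_ne j i with rfl | hji
    · simpa using hy
    · simpa [Function.update_of_ne hji] using Convex.combo_self hab (p.2 j)
  simpa using congrFun (congrArg Prod.snd (hp.2 (hmem y₁ hy₁) (hmem y₂ hy₂) hseg)) i

end CombinedSet

section Vertices

variable {V ι : Type*} [Fintype V] [DecidableEq V] {F : ι → Type*} [∀ i, AddCommGroup (F i)]
  [∀ i, Module ℝ (F i)] {R : ∀ i, Set ((V → ℝ) × F i)} {p : (V → ℝ) × ∀ i, F i}

theorem exists_fst_eq_single_of_mem_extremePoints_combinedSet [Nonempty ι]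
    (hconv : ∀ i, Convex ℝ (R i))
    (hhull : ∀ i, R i ⊆ convexHull ℝ (R i ∩ Prod.fst ⁻¹' range fun v => Pi.single v 1))
    (hp : p ∈ (combinedSet R).extremePoints ℝ) : ∃ v, p.1 = Pi.single v 1 := by
  choose y hy hsum using fun i =>
    exists_snd_eq_sum_smul_of_mem_convexHull (hconv i) (hhull i (hp.1 i))
  have hsimplex : p.1 ∈ stdSimplex ℝ V := fst_mem_stdSimplex_of_mem_convexHull (x := (p.1, p.2 _))
    (convexHull_mono inter_subset_right (hhull (Classical.arbitrary ι) (hp.1 _)))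
  let Y : V → (V → ℝ) × ∀ i, F i := fun v => (Pi.single v 1, fun i => y i v)
  have hpY : ∑ v, p.1 v • Y v = p := by
    refine Prod.ext ?_ (funext fun i => ?_)
    · funext u
      simp [Y, Prod.fst_sum, Finset.sum_apply, Pi.single_apply]
    · simpa [Y, Prod.snd_sum] using (hsum i).symm
  obtain ⟨v, -, hv⟩ := exists_lt_of_sum_lt (s := univ) (f := 0) (g := p.1)
    (by simp [hsimplex.2])
  have hYv := (Convex.combinedSet hconv).eq_of_mem_extremePoints_of_sum_smul_eq hp
    (fun v _ => hsimplex.1 v) hsimplex.2 (fun u _ hu i => hy i u hu) hpY (mem_univ v) hv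
  exact ⟨v, by rw [← hYv]⟩

theorem mk_mem_extremePoints_of_mem_extremePoints_combinedSet [DecidableEq ι]
    (hhull : ∀ i, R i ⊆ convexHull ℝ (R i ∩ Prod.fst ⁻¹' range fun v => Pi.single v 1))
    (hp : p ∈ (combinedSet R).extremePoints ℝ) {v : V} (hv : p.1 = Pi.single v 1) (i : ι) :
    (p.1, p.2 i) ∈ (R i).extremePoints ℝ := by
  have hfst : Prod.fst '' R i ⊆ stdSimplex ℝ V := image_subset_iff.2 fun q hq =>
    fst_mem_stdSimplex_of_mem_convexHull (convexHull_mono inter_subset_right (hhull i hq))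
  refine mk_mem_extremePoints_of_mem_extremePoints_fiber ?_ (snd_apply_mem_extremePoints_fiber hp i)
  exact inter_extremePoints_subset_extremePoints_of_subset hfst
    ⟨mem_image_of_mem _ (hp.1 i), hv ▸ single_mem_extremePoints_stdSimplex v⟩

end Vertices

/-- If each `Rⁱ` is a polytope (compact convex set) all of whose extreme points
have the form `(e^v, h)` with `h` integral, then every extreme point
`(λ, y¹, …, yʳ)` of the combined set `R = {(λ,y¹,…,yʳ) : (λ,yⁱ) ∈ Rⁱ ∀i}`
satisfies `λ = e^v` for some `v ∈ V` and has every `yⁱ` integral. -/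
theorem combined_formulation_extreme_points
    {V : Type*} [Fintype V] [DecidableEq V] [Nonempty V] {r : ℕ}
    (ri : Fin r → ℕ)
    (R : (i : Fin r) → Set ((V → ℝ) × (Fin (ri i) → ℝ)))
    (hconv : ∀ i, Convex ℝ (R i))
    (hcomp : ∀ i, IsCompact (R i))
    (hext : ∀ i, ∀ p ∈ Set.extremePoints ℝ (R i),
      (∃ v : V, p.1 = fun w => if w = v then (1 : ℝ) else 0) ∧
      (∀ k, ∃ z : ℤ, p.2 k = (z : ℝ))) :
    ∀ p ∈ Set.extremePoints ℝ
        {q : (V → ℝ) × ((i : Fin r) → Fin (ri i) → ℝ) | ∀ i, (q.1, q.2 i) ∈ R i},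
      (∃ v : V, p.1 = fun w => if w = v then (1 : ℝ) else 0) ∧
      (∀ i k, ∃ z : ℤ, p.2 i k = (z : ℝ)) := by
  have hsingle : ∀ v : V, (fun w => if w = v then (1 : ℝ) else 0) = Pi.single v 1 :=
    fun v => funext fun w => (Pi.single_apply v 1 w).symm
  simp only [hsingle] at hext ⊢
  intro p hp
  change p ∈ (combinedSet R).extremePoints ℝ at hp
  rcases isEmpty_or_nonempty (Fin r) with hr | hr
  · rw [combinedSet_eq_univ, extremePoints_univ] at hp
    exact hp.elim
  have hhull i := subset_convexHull_inter_fst_preimage_range_single (hconv i) (hcomp i) (hext i)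
  obtain ⟨v, hv⟩ := exists_fst_eq_single_of_mem_extremePoints_combinedSet hconv hhull hp
  exact ⟨⟨v, hv⟩, fun i =>
    (hext i _ (mk_mem_extremePoints_of_mem_extremePoints_combinedSet hhull hp hv i)).2⟩
end
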